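/- Let g = g₀ ⊕ g₁ be a non-degenerate filiform Lie superalgebra over ℂ with dim g₀ = 5 (i.e. n = 4) and dim g₁ = 2. If g is naturally graded, then g is isomorphic to the Lie superalgebra with basis {X₀,X₁,X₂,X₃,X₄,Y₁,Y₂} and law [X₀,X_i] = X_{i+1} for 1 ≤ i ≤ 3, [X₀,Y₁] = Y₂, (Y₁,Y₁) = 2X₂, (Y₁,Y₂) = X₃, (Y₂,Y₂) = X₄. -/

import Mathlib

/-- The sign `(-1)^(i·j)` for parities `i j : ZMod 2`, as a complex scalar. -/
def ssign (i j : ZMod 2) : ℂ := if i = 1 ∧ j = 1 then -1 else 1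

/-- A (complex) Lie superalgebra structure on the vector space `V`: a ℤ₂-grading
`g` whose parts are complementary, together with an even bilinear bracket which is
super skew-symmetric and satisfies the super Jacobi identity on homogeneous elements. -/
structure LieSuperAlg (V : Type*) [AddCommGroup V] [Module ℂ V] where
  g : ZMod 2 → Submodule ℂ V
  bk : V →ₗ[ℂ] V →ₗ[ℂ] V
  compl : IsCompl (g 0) (g 1)
  grading : ∀ i j : ZMod 2, ∀ x ∈ g i, ∀ y ∈ g j, bk x y ∈ g (i + j)
  skew : ∀ i j : ZMod 2, ∀ x ∈ g i, ∀ y ∈ g j, bk x y = -(ssign i j • bk y x)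
  jacobi : ∀ i j k : ZMod 2, ∀ x ∈ g i, ∀ y ∈ g j, ∀ z ∈ g k,
    ssign k i • bk x (bk y z) + ssign i j • bk y (bk z x) + ssign j k • bk z (bk x y) = 0

namespace LieSuperAlg

variable {V : Type*} [AddCommGroup V] [Module ℂ V]

/-- The descending sequences `C⁰(g_i) = g_i`, `C^{k+1}(g_i) = [g₀, C^k(g_i)]`. -/
def C (A : LieSuperAlg V) (i : ZMod 2) : ℕ → Submodule ℂ V
  | 0 => A.g i
  | k + 1 => Submodule.span ℂ {z | ∃ x ∈ A.g 0, ∃ y ∈ C A i k, z = A.bk x y}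

/-- The descending central sequence of the whole superalgebra. -/
def DC (A : LieSuperAlg V) : ℕ → Submodule ℂ V
  | 0 => ⊤
  | k + 1 => Submodule.span ℂ {z | ∃ x ∈ DC A k, ∃ y : V, z = A.bk x y}

/-- Nilpotency: the descending central sequence reaches zero. -/
def IsNilpotent (A : LieSuperAlg V) : Prop := ∃ k, A.DC k = ⊥

/-- `A` is filiform with parameters `(n, m)`: it is nilpotent, `dim g₀ = n + 1`,
`dim g₁ = m`, and the super-nilindex is `(n, m)` (the maximal one). -/
def IsFiliform (A : LieSuperAlg V) (n m : ℕ) : Prop :=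
  A.IsNilpotent ∧ Module.finrank ℂ (A.g 0) = n + 1 ∧ Module.finrank ℂ (A.g 1) = m ∧
    A.C 0 (n - 1) ≠ ⊥ ∧ A.C 1 (m - 1) ≠ ⊥ ∧ A.C 0 n = ⊥ ∧ A.C 1 m = ⊥

/-- Non-degeneracy: the bracket does not vanish identically on `g₁ × g₁`. -/
def NonDegenerate (A : LieSuperAlg V) : Prop :=
  ∃ x ∈ A.g 1, ∃ y ∈ A.g 1, A.bk x y ≠ 0

/-- `A` is naturally graded: there are subspaces `W a i` (`i ≥ 1`, parity `a`), splitting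
the filtrations `C` (so that `W a i ≅ C^{i-1}(g_a)/C^i(g_a)` and `g ≅ gr(g)` in the
natural way) and compatible with the bracket (so `gr(g)` is a graded Lie superalgebra,
`[gⁱ, gʲ] ⊆ g^{i+j}`).  For finite-dimensional nilpotent superalgebras this is
equivalent to the textbook definition `g ≅ gr(g)` with `gr(g)` graded. -/
def NaturallyGraded (A : LieSuperAlg V) : Prop :=
  ∃ W : ZMod 2 → ℕ → Submodule ℂ V,
    (∀ a, W a 0 = ⊥) ∧
    (∀ a k, A.C a k = W a (k + 1) ⊔ A.C a (k + 1)) ∧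
    (∀ a k, W a (k + 1) ⊓ A.C a (k + 1) = ⊥) ∧
    (∀ a b : ZMod 2, ∀ i j : ℕ, ∀ x ∈ W a i, ∀ y ∈ W b j, A.bk x y ∈ W (a + b) (i + j))

/-- `X 0, …, X n` and `Y 1, …, Y m` form an adapted basis of the superalgebra:
the `X i` are even, the `Y j` are odd, and together they form a basis of `V`. -/
def IsAdaptedBasis (A : LieSuperAlg V) (n m : ℕ) (X Y : ℕ → V) : Prop :=
  (∀ i, i ≤ n → X i ∈ A.g 0) ∧ (∀ j, 1 ≤ j → j ≤ m → Y j ∈ A.g 1) ∧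
  LinearIndependent ℂ
    (Sum.elim (fun i : Fin (n + 1) => X i.val) (fun j : Fin m => Y (j.val + 1))) ∧
  Submodule.span ℂ
    (Set.range (Sum.elim (fun i : Fin (n + 1) => X i.val) (fun j : Fin m => Y (j.val + 1)))) = ⊤

end LieSuperAlg

/-!
Write `W a i` for the homogeneous piece of parity `a` and degree `i` of `gr(g) ≅ g`. The maximal
super-nilindex makes `W 0 1, …, W 0 4, W 1 1, W 1 2` nonzero, and `gr(g)` is generated by
`W 0 1`; as `[W 0 1, W 0 1] = W 0 2 ≠ 0` forces `dim W 0 1 ≥ 2`, the dimensions are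
`(2, 1, 1, 1 | 1, 1)`. Take `x₀ ∈ W 0 1` acting nontrivially on `W 0 2` and on `W 0 3` and
complete it to a basis `x₀, x₁`: the iterated brackets `X₂ = [x₀, x₁]`, `X₃ = [x₀, X₂]`,
`X₄ = [x₀, X₃]` span `W 0 2, W 0 3, W 0 4`, and Jacobi shows that `x₁ - c • x₀` commutes with
them for a suitable `c`. On the odd side write `[x₀, y] = α z`, `[x₁, y] = β z`,
`(y, y) = p X₂`, `(y, z) = q X₃`, `(z, z) = r X₄` with `y`, `z` spanning `W 1 1`, `W 1 2`.
Jacobi gives `p = 2αq`, `q = αr` and `βr = 0`, non-degeneracy forces `r ≠ 0`, and rescaling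
`y` by a square root of `(αq)⁻¹` produces the law of the model.
-/

open Submodule Module

section LinearAlgebra

variable {R M N P : Type*} [Semiring R] [AddCommMonoid M] [AddCommMonoid N] [AddCommMonoid P]
  [Module R M] [Module R N] [Module R P]

lemma Submodule.exists_mem_apply_ne_zero_and (p : Submodule R M) (f : M →ₗ[R] N) (g : M →ₗ[R] P)
    (hf : ∃ x ∈ p, f x ≠ 0) (hg : ∃ x ∈ p, g x ≠ 0) : ∃ x ∈ p, f x ≠ 0 ∧ g x ≠ 0 := by
  obtain ⟨x, hx, hfx⟩ := hf
  obtain ⟨y, hy, hgy⟩ := hg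
  by_cases hgx : g x = 0
  · by_cases hfy : f y = 0
    · exact ⟨x + y, add_mem hx hy, by simpa [hfy], by simpa [hgx]⟩
    · exact ⟨y, hy, hfy, hgy⟩
  · exact ⟨x, hx, hfx, hgx⟩

end LinearAlgebra

section FieldLinearAlgebra

variable {K M N : Type*} [Field K] [AddCommGroup M] [Module K M] [AddCommGroup N] [Module K N]

lemma Submodule.span_singleton_eq_of_finrank_eq_one {p : Submodule K M} (h : finrank K p = 1)
    {v : M} (hv : v ∈ p) (h0 : v ≠ 0) : span K {v} = p :=
  have := Module.finite_of_finrank_pos (h ▸ Nat.one_pos : 0 < finrank K p)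
  eq_of_le_of_finrank_le ((span_singleton_le_iff_mem _ _).2 hv)
    (by rw [finrank_span_singleton h0, h])

lemma Submodule.ne_zero_of_finrank_eq_one {p : Submodule K M} (h : finrank K p = 1) {e : M}
    (hp : p = span K {e}) : e ≠ 0 := by
  rintro rfl
  rw [span_zero_singleton] at hp
  subst hp
  simp at h

lemma Submodule.exists_ne_zero_eq_span_singleton {p : Submodule K M} (h : finrank K p = 1) :
    ∃ e ≠ (0 : M), p = span K {e} := by
  have := Module.finite_of_finrank_pos (h ▸ Nat.one_pos : 0 < finrank K p)
  obtain ⟨e, he⟩ := (p.finrank_le_one_iff_isPrincipal.1 h.le).principal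
  exact ⟨e, ne_zero_of_finrank_eq_one h he, he⟩

lemma Submodule.eq_span_pair_of_finrank_eq_two {p : Submodule K M} (h : finrank K p = 2)
    {x y : M} (hx : x ∈ p) (hy : y ∈ p) (hx0 : x ≠ 0) (hxy : y ∉ span K {x}) :
    p = span K {x, y} := by
  have := Module.finite_of_finrank_pos (h ▸ Nat.two_pos : 0 < finrank K p)
  have hle : span K {x, y} ≤ p := span_le.2 (Set.insert_subset hx (Set.singleton_subset_iff.2 hy))
  have := Submodule.finiteDimensional_of_le hle
  have hlt : span K {x} < span K {x, y} :=
    lt_of_le_of_ne (span_mono (Set.singleton_subset_iff.2 (Set.mem_insert x {y})))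
      fun heq => hxy (heq ▸ subset_span (Set.mem_insert_of_mem x rfl))
  have := finrank_lt_finrank_of_lt hlt
  rw [finrank_span_singleton hx0] at this
  exact (eq_of_le_of_finrank_le hle (by omega)).symm

lemma Submodule.span_pair_sub_smul (x y : M) (c : K) : span K {x, y - c • x} = span K {x, y} := by
  refine le_antisymm (span_le.2 ?_) (span_le.2 ?_) <;> rintro z (rfl | rfl)
  · exact subset_span (Set.mem_insert z _)
  · exact mem_span_pair.2 ⟨-c, 1, by module⟩
  · exact subset_span (Set.mem_insert z _)
  · exact mem_span_pair.2 ⟨c, 1, by module⟩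

lemma LinearMap.map_ne_zero_of_mem_span_singleton (f : M →ₗ[K] N) {e y : M} (he : f e ≠ 0)
    (hy : y ∈ span K {e}) (hy0 : y ≠ 0) : f y ≠ 0 := by
  obtain ⟨c, rfl⟩ := mem_span_singleton.1 hy
  rw [map_smul]
  exact smul_ne_zero (left_ne_zero_of_smul hy0) he

end FieldLinearAlgebra

namespace LieSuperAlg

variable {V : Type*} [AddCommGroup V] [Module ℂ V]

section Bracket

@[simp] lemma ssign_zero_left (j : ZMod 2) : ssign 0 j = 1 := if_neg (by simp)

@[simp] lemma ssign_zero_right (i : ZMod 2) : ssign i 0 = 1 := if_neg (by simp)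

lemma ssign_one_one : ssign 1 1 = -1 := if_pos ⟨rfl, rfl⟩

lemma ssign_comm (i j : ZMod 2) : ssign i j = ssign j i := by
  simp only [ssign, and_comm]

lemma ssign_mul_self (i j : ZMod 2) : ssign i j * ssign i j = 1 := by
  unfold ssign; split_ifs <;> norm_num

variable {A : LieSuperAlg V} {u v x y z : V} {j k : ZMod 2}

lemma bk_swap_of_even (hx : x ∈ A.g 0) (hy : y ∈ A.g j) : A.bk y x = -A.bk x y := by
  simpa using A.skew j 0 y hy x hx

lemma bk_self_of_even (hx : x ∈ A.g 0) : A.bk x x = 0 := by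
  have h := bk_swap_of_even hx hx
  rwa [eq_neg_iff_add_eq_zero, ← two_smul ℂ, smul_eq_zero, or_iff_right two_ne_zero] at h

lemma bk_comm_of_odd (hx : x ∈ A.g 1) (hy : y ∈ A.g 1) : A.bk x y = A.bk y x := by
  simpa [ssign_one_one] using A.skew 1 1 x hx y hy

lemma bk_leibniz_of_even (hx : x ∈ A.g 0) (hy : y ∈ A.g j) (hz : z ∈ A.g k) :
    A.bk x (A.bk y z) = A.bk (A.bk x y) z + A.bk y (A.bk x z) := by
  have hxy : A.bk x y ∈ A.g j := by simpa using A.grading 0 j x hx y hy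
  have hJ := A.jacobi 0 j k x hx y hy z hz
  rw [bk_swap_of_even hx hz, A.skew k j z hz _ hxy, ssign_comm k j, smul_neg, smul_smul,
    ssign_mul_self, one_smul] at hJ
  simp only [ssign_zero_left, ssign_zero_right, one_smul, map_neg] at hJ
  linear_combination (norm := module) hJ

lemma bk_bk_self_of_odd (hx : x ∈ A.g 0) (hy : y ∈ A.g 1) :
    A.bk x (A.bk y y) = (2 : ℂ) • A.bk (A.bk x y) y := by
  have hxy : A.bk x y ∈ A.g 1 := by simpa using A.grading 0 1 x hx y hy
  rw [bk_leibniz_of_even hx hy hy, bk_comm_of_odd hy hxy, two_smul]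

lemma NonDegenerate.bk_ne_zero (hnd : A.NonDegenerate) (h : A.g 1 = span ℂ {y, z}) :
    A.bk y y ≠ 0 ∨ A.bk y z ≠ 0 ∨ A.bk z z ≠ 0 := by
  obtain ⟨u, hu, v, hv, huv⟩ := hnd
  have hzy : A.bk z y = A.bk y z :=
    bk_comm_of_odd (h ▸ subset_span (Set.mem_insert_of_mem y rfl))
      (h ▸ subset_span (Set.mem_insert y _))
  rw [h] at hu hv
  obtain ⟨a, b, rfl⟩ := mem_span_pair.1 hu
  obtain ⟨c, d, rfl⟩ := mem_span_pair.1 hv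
  by_contra! h0
  simp only [map_add, map_smul, LinearMap.add_apply, LinearMap.smul_apply, hzy, h0.1, h0.2.1,
    h0.2.2, smul_zero, add_zero] at huv
  exact huv rfl

lemma map₂_bk_span_pair_le (hu : u ∈ A.g 0) (hv : v ∈ A.g 0) :
    map₂ A.bk (span ℂ {u, v}) (span ℂ {u, v}) ≤ span ℂ {A.bk u v} := by
  refine map₂_le.2 fun x hx y hy => ?_
  obtain ⟨a, b, rfl⟩ := mem_span_pair.1 hx
  obtain ⟨c, d, rfl⟩ := mem_span_pair.1 hy
  refine mem_span_singleton.2 ⟨a * d - b * c, ?_⟩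
  simp only [map_add, map_smul, LinearMap.add_apply, LinearMap.smul_apply,
    bk_self_of_even hu, bk_self_of_even hv, bk_swap_of_even hu hv]
  module

lemma odd_structure_constants_of_jacobi {x₀ x₁ s x₃ x₄ : V} {α β p q r : ℂ}
    (hx₀ : x₀ ∈ A.g 0) (hx₁ : x₁ ∈ A.g 0) (hy : y ∈ A.g 1) (hz : z ∈ A.g 1)
    (hx₃ : A.bk x₀ s = x₃) (hx₄ : A.bk x₀ x₃ = x₄) (hx₁x₃ : A.bk x₁ x₃ = 0) (hx₃0 : x₃ ≠ 0)
    (hx₄0 : x₄ ≠ 0) (hα : A.bk x₀ y = α • z) (hβ : A.bk x₁ y = β • z) (hx₀z : A.bk x₀ z = 0)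
    (hx₁z : A.bk x₁ z = 0) (hp : A.bk y y = p • s) (hq : A.bk y z = q • x₃)
    (hr : A.bk z z = r • x₄) :
    p = 2 * α * q ∧ q = α * r ∧ β * r = 0 := by
  refine ⟨?_, ?_, ?_⟩
  · have h := bk_bk_self_of_odd hx₀ hy
    rw [hp, hα, map_smul, map_smul, LinearMap.smul_apply, bk_comm_of_odd hz hy, hq, hx₃,
      smul_smul, smul_smul] at h
    exact (smul_left_inj hx₃0).1 h
  · have h := bk_leibniz_of_even hx₀ hy hz
    rw [hq, hα, hx₀z, map_zero, add_zero, map_smul, map_smul, hx₄, LinearMap.smul_apply, hr,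
      smul_smul] at h
    exact (smul_left_inj hx₄0).1 h
  · have h := bk_leibniz_of_even hx₁ hy hz
    rw [hq, hβ, hx₁z, map_zero, add_zero, map_smul, map_smul, hx₁x₃, smul_zero,
      LinearMap.smul_apply, hr, smul_smul, eq_comm, smul_eq_zero] at h
    exact h.resolve_right hx₄0

lemma exists_smul_normalize {x₀ s x₃ x₄ : V} {α q r : ℂ} (hα0 : α ≠ 0) (hq0 : q ≠ 0)
    (hqr : q = α * r) (hα : A.bk x₀ y = α • z) (hyy : A.bk y y = (2 * α * q) • s)
    (hyz : A.bk y z = q • x₃) (hzz : A.bk z z = r • x₄) :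
    ∃ l : ℂ, l ≠ 0 ∧ A.bk (l • y) (l • y) = (2 : ℂ) • s ∧
      A.bk (l • y) (A.bk x₀ (l • y)) = x₃ ∧ A.bk (A.bk x₀ (l • y)) (A.bk x₀ (l • y)) = x₄ := by
  obtain ⟨l, hl⟩ := IsAlgClosed.exists_pow_nat_eq (α * q)⁻¹ two_pos
  have hl2 : l ^ 2 * (α * q) = 1 := by rw [hl]; exact inv_mul_cancel₀ (mul_ne_zero hα0 hq0)
  refine ⟨l, by rintro rfl; simp at hl2, ?_, ?_, ?_⟩ <;>
    simp only [map_smul, LinearMap.smul_apply, hα, hyy, hyz, hzz, smul_smul]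
  · rw [show l * (l * (2 * α * q)) = 2 by linear_combination 2 * hl2]
  · rw [show l * α * (l * q) = 1 by linear_combination hl2, one_smul]
  · rw [show l * α * (l * α * r) = 1 by linear_combination hl2 - l ^ 2 * α * hqr, one_smul]

end Bracket

section Filtration

variable (A : LieSuperAlg V) {a : ZMod 2} {x y : V}

lemma bk_mem_C_succ {k : ℕ} (hx : x ∈ A.g 0) (hy : y ∈ A.C a k) : A.bk x y ∈ A.C a (k + 1) :=
  subset_span ⟨x, hx, y, hy, rfl⟩

lemma C_succ_le (k : ℕ) : A.C a (k + 1) ≤ A.C a k := by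
  induction k with
  | zero =>
    refine span_le.2 ?_
    rintro _ ⟨x, hx, y, hy, rfl⟩
    simpa [C] using A.grading 0 a x hx y hy
  | succ k ih =>
    refine span_mono ?_
    rintro _ ⟨x, hx, y, hy, rfl⟩
    exact ⟨x, hx, y, ih hy, rfl⟩

lemma C_antitone : Antitone (A.C a) := antitone_nat_of_succ_le A.C_succ_le

lemma C_succ_congr {k l : ℕ} (h : A.C a k = A.C a l) : A.C a (k + 1) = A.C a (l + 1) := by
  simp only [C, h]

lemma C_add_eq_of_C_succ_eq {k : ℕ} (h : A.C a (k + 1) = A.C a k) (j : ℕ) :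
    A.C a (k + j) = A.C a k := by
  induction j with
  | zero => rfl
  | succ j ih => rw [← add_assoc, A.C_succ_congr ih, h]

end Filtration

lemma isAdaptedBasis_of_le_span {A : LieSuperAlg V} [FiniteDimensional ℂ V] {n m : ℕ} {X Y : ℕ → V}
    (hX : ∀ i, i ≤ n → X i ∈ A.g 0) (hY : ∀ j, 1 ≤ j → j ≤ m → Y j ∈ A.g 1)
    (h0 : finrank ℂ (A.g 0) = n + 1) (h1 : finrank ℂ (A.g 1) = m)
    (hspan : A.g 0 ⊔ A.g 1 ≤ span ℂ (Set.range
      (Sum.elim (fun i : Fin (n + 1) => X i.val) (fun j : Fin m => Y (j.val + 1))))) :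
    A.IsAdaptedBasis n m X Y := by
  rw [A.compl.sup_eq_top] at hspan
  refine ⟨hX, hY, linearIndependent_of_top_le_span_of_card_eq_finrank hspan ?_,
    eq_top_iff.2 hspan⟩
  rw [← finrank_add_eq_of_isCompl A.compl, h0, h1]
  simp

/-- The witnesses of `NaturallyGraded`, bundled. -/
structure NaturalGrading (A : LieSuperAlg V) where
  W : ZMod 2 → ℕ → Submodule ℂ V
  C_eq_sup : ∀ a k, A.C a k = W a (k + 1) ⊔ A.C a (k + 1)
  inf_C_eq_bot : ∀ a k, W a (k + 1) ⊓ A.C a (k + 1) = ⊥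
  bk_mem : ∀ a b : ZMod 2, ∀ i j : ℕ, ∀ x ∈ W a i, ∀ y ∈ W b j, A.bk x y ∈ W (a + b) (i + j)

namespace NaturalGrading

variable {A : LieSuperAlg V} (G : A.NaturalGrading) {a : ZMod 2} {N k : ℕ} {u v x y e : V}

lemma W_le_C : G.W a (k + 1) ≤ A.C a k := (G.C_eq_sup a k).symm ▸ le_sup_left

lemma W_le_g : G.W a (k + 1) ≤ A.g a := G.W_le_C.trans (A.C_antitone k.zero_le)

lemma W_eq_bot (hN : A.C a N = ⊥) (hk : N ≤ k) : G.W a (k + 1) = ⊥ :=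
  le_bot_iff.1 (G.W_le_C.trans ((A.C_antitone hk).trans_eq hN))

lemma bk_eq_zero {i j : ℕ} (hN : A.C a N = ⊥) (hij : N < i + j) (hx : x ∈ G.W 0 i)
    (hy : y ∈ G.W a j) : A.bk x y = 0 := by
  have h := G.bk_mem 0 a i j x hx y hy
  obtain ⟨l, hl⟩ := Nat.exists_eq_add_of_lt hij
  rwa [zero_add, hl, G.W_eq_bot hN (by omega), mem_bot] at h

lemma W_ne_bot (hN : A.C a N = ⊥) (hN' : A.C a (N - 1) ≠ ⊥) (hk : k < N) :
    G.W a (k + 1) ≠ ⊥ := by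
  intro hW
  have hstable := A.C_add_eq_of_C_succ_eq (by rw [G.C_eq_sup a k, hW, bot_sup_eq])
  have h1 := hstable (N - 1 - k)
  have h2 := hstable (N - k)
  rw [Nat.add_sub_cancel' (by omega)] at h1 h2
  exact hN' (h1.trans (h2.symm.trans hN))

lemma C_le_of_forall_W_le {p : Submodule ℂ V} (hN : A.C a N = ⊥)
    (hW : ∀ i, k ≤ i → i < N → G.W a (i + 1) ≤ p) : A.C a k ≤ p := by
  suffices ∀ d l, k ≤ l → N ≤ l + d → A.C a l ≤ p from this N k le_rfl (by omega)
  intro d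
  induction d with
  | zero => exact fun l _ hl => (A.C_antitone hl).trans (hN ▸ bot_le)
  | succ d ih =>
    intro l hkl hl
    rcases lt_or_ge l N with hlN | hlN
    · rw [G.C_eq_sup a l]
      exact sup_le (hW l hkl hlN) (ih (l + 1) (by omega) (by omega))
    · exact (A.C_antitone hlN).trans (hN ▸ bot_le)

lemma finrank_g_eq_sum [FiniteDimensional ℂ V] (hN : A.C a N = ⊥) :
    finrank ℂ (A.g a) = ∑ i ∈ Finset.range N, finrank ℂ (G.W a (i + 1)) := by
  suffices ∀ k, finrank ℂ (A.g a) =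
      ∑ i ∈ Finset.range k, finrank ℂ (G.W a (i + 1)) + finrank ℂ (A.C a k) by
    rw [this N, hN, finrank_bot, add_zero]
  intro k
  induction k with
  | zero => simp only [Finset.range_zero, Finset.sum_empty, zero_add]; rfl
  | succ k ih =>
    have h := finrank_sup_add_finrank_inf_eq (G.W a (k + 1)) (A.C a (k + 1))
    rw [G.inf_C_eq_bot, ← G.C_eq_sup, finrank_bot, add_zero] at h
    rw [ih, h, Finset.sum_range_succ, add_assoc]

lemma bk_mem_C_of_mem_C_one (hN : A.C 0 N = ⊥) (hx : x ∈ A.C 0 1) (hy : y ∈ G.W a (k + 1)) :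
    A.bk x y ∈ A.C a (k + 2) := by
  refine G.C_le_of_forall_W_le (p := (A.C a (k + 2)).comap (A.bk.flip y)) hN ?_ hx
  intro i hi _ x' hx'
  have h := G.bk_mem 0 a (i + 1) (k + 1) x' hx' y hy
  rw [zero_add, show i + 1 + (k + 1) = (i + k + 1) + 1 by omega] at h
  exact A.C_antitone (show k + 2 ≤ i + k + 1 by omega) (G.W_le_C h)

lemma W_add_two_eq_map₂ (hN : A.C 0 N = ⊥) :
    G.W a (k + 2) = map₂ A.bk (G.W 0 1) (G.W a (k + 1)) := by
  set B := map₂ A.bk (G.W 0 1) (G.W a (k + 1))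
  have hBW : B ≤ G.W a (k + 2) := map₂_le.2 fun x hx y hy => by
    simpa [add_comm 1 (k + 1)] using G.bk_mem 0 a 1 (k + 1) x hx y hy
  have hC : A.C a (k + 1) ≤ B ⊔ A.C a (k + 2) := by
    refine span_le.2 ?_
    rintro _ ⟨x, hx, y, hy, rfl⟩
    have hx' : x ∈ G.W 0 1 ⊔ A.C 0 1 := G.C_eq_sup 0 0 ▸ hx
    rw [G.C_eq_sup a k] at hy
    obtain ⟨x₁, hx₁, x₂, hx₂, rfl⟩ := mem_sup.1 hx'
    obtain ⟨y₁, hy₁, y₂, hy₂, rfl⟩ := mem_sup.1 hy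
    have hx₂g : x₂ ∈ A.g 0 := A.C_antitone (Nat.zero_le 1) hx₂
    simp only [map_add, LinearMap.add_apply]
    refine add_mem (add_mem (mem_sup_left (apply_mem_map₂ _ hx₁ hy₁)) ?_) ?_
    · exact mem_sup_right (G.bk_mem_C_of_mem_C_one hN hx₂ hy₁)
    · exact mem_sup_right (add_mem (A.bk_mem_C_succ (G.W_le_g hx₁) hy₂)
        (A.bk_mem_C_succ hx₂g hy₂))
  refine le_antisymm ?_ hBW
  calc G.W a (k + 2) = (B ⊔ A.C a (k + 2)) ⊓ G.W a (k + 2) :=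
        (inf_eq_right.2 (G.W_le_C.trans hC)).symm
    _ = B := by rw [sup_inf_assoc_of_le _ hBW, inf_comm, G.inf_C_eq_bot, sup_bot_eq]
    _ ≤ B := le_rfl

lemma W_two_eq_span_bk (hN : A.C 0 N = ⊥) (h : G.W 0 1 = span ℂ {u, v}) :
    G.W 0 2 = span ℂ {A.bk u v} := by
  have hu : u ∈ G.W 0 1 := h ▸ subset_span (Set.mem_insert u _)
  have hv : v ∈ G.W 0 1 := h ▸ subset_span (Set.mem_insert_of_mem u rfl)
  refine le_antisymm ?_ ((span_singleton_le_iff_mem _ _).2 (G.bk_mem 0 0 1 1 u hu v hv))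
  rw [G.W_add_two_eq_map₂ (k := 0) hN, h]
  exact map₂_bk_span_pair_le (G.W_le_g hu) (G.W_le_g hv)

lemma two_le_finrank_W_one [FiniteDimensional ℂ V] (hN : A.C 0 N = ⊥) (h2 : G.W 0 2 ≠ ⊥) :
    2 ≤ finrank ℂ (G.W 0 1) := by
  by_contra! h1
  obtain ⟨v, hv⟩ := ((G.W 0 1).finrank_le_one_iff_isPrincipal.1 (by omega)).principal
  rw [← Set.pair_eq_singleton] at hv
  have hvW : v ∈ G.W 0 1 := hv ▸ subset_span (Set.mem_insert v _)
  rw [G.W_two_eq_span_bk hN hv, bk_self_of_even (G.W_le_g hvW),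
    span_zero_singleton] at h2
  exact h2 rfl

lemma exists_bk_ne_zero (hN : A.C 0 N = ⊥) (hW : G.W a (k + 1) = span ℂ {e})
    (hne : G.W a (k + 2) ≠ ⊥) : ∃ x ∈ G.W 0 1, A.bk.flip e x ≠ 0 := by
  by_contra! h
  refine hne (eq_bot_iff.2 ?_)
  rw [G.W_add_two_eq_map₂ hN, hW, map₂_span_singleton_eq_map_flip]
  exact map_le_iff_le_comap.2 fun x hx => h x hx

lemma finrank_W_of_isFiliform [FiniteDimensional ℂ V] (hfil : A.IsFiliform 4 2) :
    finrank ℂ (G.W 0 1) = 2 ∧ finrank ℂ (G.W 0 2) = 1 ∧ finrank ℂ (G.W 0 3) = 1 ∧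
      finrank ℂ (G.W 0 4) = 1 ∧ finrank ℂ (G.W 1 1) = 1 ∧ finrank ℂ (G.W 1 2) = 1 := by
  obtain ⟨-, hdim0, hdim1, hC03, hC11, hC04, hC12⟩ := hfil
  have hpos {a : ZMod 2} {N k : ℕ} (hN : A.C a N = ⊥) (hN' : A.C a (N - 1) ≠ ⊥) (hk : k < N) :
      0 < finrank ℂ (G.W a (k + 1)) :=
    Nat.pos_of_ne_zero fun h => G.W_ne_bot hN hN' hk (finrank_eq_zero.1 h)
  have h01 := G.two_le_finrank_W_one hC04 (G.W_ne_bot hC04 hC03 (k := 1) (by norm_num))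
  have h02 : 0 < finrank ℂ (G.W 0 2) := hpos hC04 hC03 (k := 1) (by norm_num)
  have h03 : 0 < finrank ℂ (G.W 0 3) := hpos hC04 hC03 (k := 2) (by norm_num)
  have h04 : 0 < finrank ℂ (G.W 0 4) := hpos hC04 hC03 (k := 3) (by norm_num)
  have h11 : 0 < finrank ℂ (G.W 1 1) := hpos hC12 hC11 (k := 0) (by norm_num)
  have h12 : 0 < finrank ℂ (G.W 1 2) := hpos hC12 hC11 (k := 1) (by norm_num)
  have hsum0 := G.finrank_g_eq_sum hC04
  have hsum1 := G.finrank_g_eq_sum hC12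
  simp only [Finset.sum_range_succ, Finset.sum_range_zero, zero_add, Nat.reduceAdd] at hsum0 hsum1
  omega

lemma exists_W_one_eq_span_pair (hN : A.C 0 N = ⊥) (h1 : finrank ℂ (G.W 0 1) = 2)
    (h2 : finrank ℂ (G.W 0 2) = 1) (h3 : finrank ℂ (G.W 0 3) = 1)
    (h4 : finrank ℂ (G.W 0 4) = 1) :
    ∃ x₀ x₁ : V, G.W 0 1 = span ℂ {x₀, x₁} ∧ G.W 0 3 = span ℂ {A.bk x₀ (A.bk x₀ x₁)} ∧
      G.W 0 4 = span ℂ {A.bk x₀ (A.bk x₀ (A.bk x₀ x₁))} := by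
  have hne {k : ℕ} (h : finrank ℂ (G.W 0 k) = 1) : G.W 0 k ≠ ⊥ := fun hk => by
    rw [hk, finrank_bot] at h; exact zero_ne_one h
  obtain ⟨e₂, -, hW₂⟩ := exists_ne_zero_eq_span_singleton h2
  obtain ⟨e₃, -, hW₃⟩ := exists_ne_zero_eq_span_singleton h3
  obtain ⟨x₀, hx₀, h₂, h₃⟩ := (G.W 0 1).exists_mem_apply_ne_zero_and _ _
    (G.exists_bk_ne_zero hN hW₂ (hne h3)) (G.exists_bk_ne_zero hN hW₃ (hne h4))
  have hx₀0 : x₀ ≠ 0 := by rintro rfl; simp at h₂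
  obtain ⟨x₁, hx₁, hx₀x₁⟩ := SetLike.exists_of_lt (lt_of_le_of_ne
    ((span_singleton_le_iff_mem _ _).2 hx₀) fun h => by
      have := h ▸ finrank_span_singleton hx₀0; omega)
  have hW₁ := eq_span_pair_of_finrank_eq_two h1 hx₀ hx₁ hx₀0 hx₀x₁
  have hs : A.bk x₀ x₁ ∈ span ℂ {e₂} := hW₂ ▸ G.bk_mem 0 0 1 1 _ hx₀ _ hx₁
  have hs0 : A.bk x₀ x₁ ≠ 0 := fun h =>
    hne h2 (by rw [G.W_two_eq_span_bk hN hW₁, h, span_zero_singleton])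
  have hx₃ := (A.bk x₀).map_ne_zero_of_mem_span_singleton h₂ hs hs0
  have hx₃W : A.bk x₀ (A.bk x₀ x₁) ∈ G.W 0 3 := G.bk_mem 0 0 1 2 _ hx₀ _ (hW₂ ▸ hs)
  have hx₄ := (A.bk x₀).map_ne_zero_of_mem_span_singleton h₃ (hW₃ ▸ hx₃W) hx₃
  have hx₄W : A.bk x₀ (A.bk x₀ (A.bk x₀ x₁)) ∈ G.W 0 4 := G.bk_mem 0 0 1 3 _ hx₀ _ hx₃W
  exact ⟨x₀, x₁, hW₁, (span_singleton_eq_of_finrank_eq_one h3 hx₃W hx₃).symm,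
    (span_singleton_eq_of_finrank_eq_one h4 hx₄W hx₄).symm⟩

lemma exists_even_model_basis (hN : A.C 0 N = ⊥) (h1 : finrank ℂ (G.W 0 1) = 2)
    (h2 : finrank ℂ (G.W 0 2) = 1) (h3 : finrank ℂ (G.W 0 3) = 1)
    (h4 : finrank ℂ (G.W 0 4) = 1) :
    ∃ x₀ x₁ : V, G.W 0 1 = span ℂ {x₀, x₁} ∧ G.W 0 2 = span ℂ {A.bk x₀ x₁} ∧
      G.W 0 3 = span ℂ {A.bk x₀ (A.bk x₀ x₁)} ∧
      G.W 0 4 = span ℂ {A.bk x₀ (A.bk x₀ (A.bk x₀ x₁))} ∧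
      A.bk x₁ (A.bk x₀ x₁) = 0 ∧ A.bk x₁ (A.bk x₀ (A.bk x₀ x₁)) = 0 := by
  obtain ⟨x₀, x₁, hW₁, hW₃, hW₄⟩ := G.exists_W_one_eq_span_pair hN h1 h2 h3 h4
  have hx₀ : x₀ ∈ G.W 0 1 := hW₁ ▸ subset_span (Set.mem_insert x₀ _)
  have hx₁ : x₁ ∈ G.W 0 1 := hW₁ ▸ subset_span (Set.mem_insert_of_mem x₀ rfl)
  have hs : A.bk x₀ x₁ ∈ G.W 0 2 := G.bk_mem 0 0 1 1 _ hx₀ _ hx₁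
  obtain ⟨c, hc⟩ := mem_span_singleton.1 (hW₃ ▸ G.bk_mem 0 0 1 2 _ hx₁ _ hs)
  -- `ad x₁ = c • ad x₀` on `W 0 2`; Jacobi propagates this to `W 0 3`, so `x₁ - c • x₀` kills both
  have hx₁x₃ : A.bk x₁ (A.bk x₀ (A.bk x₀ x₁)) = c • A.bk x₀ (A.bk x₀ (A.bk x₀ x₁)) := by
    have h := bk_leibniz_of_even (G.W_le_g hx₀) (G.W_le_g hx₁) (G.W_le_g (k := 1) hs)
    rwa [← hc, map_smul, bk_self_of_even (G.W_le_g (k := 1) hs), zero_add, eq_comm] at h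
  have hs' : A.bk x₀ (x₁ - c • x₀) = A.bk x₀ x₁ := by
    rw [map_sub, map_smul, bk_self_of_even (G.W_le_g hx₀), smul_zero, sub_zero]
  refine ⟨x₀, x₁ - c • x₀, by rw [span_pair_sub_smul, hW₁], ?_⟩
  simp only [hs']
  refine ⟨G.W_two_eq_span_bk hN hW₁, hW₃, hW₄, ?_, ?_⟩ <;>
    simp only [map_sub, map_smul, LinearMap.sub_apply, LinearMap.smul_apply, ← hc, hx₁x₃,
      sub_self]

lemma g_one_eq_span_pair (hN : A.C 1 2 = ⊥) {y z : V} (hy : G.W 1 1 = span ℂ {y})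
    (hz : G.W 1 2 = span ℂ {z}) : A.g 1 = span ℂ {y, z} := by
  have h := G.C_eq_sup 1 1
  rw [hN, sup_bot_eq] at h
  rw [span_insert, ← hy, ← hz, ← h]
  exact G.C_eq_sup 1 0

lemma exists_odd_model_basis (hN : A.C 0 N = ⊥) (hN₁ : A.C 1 2 = ⊥) (hnd : A.NonDegenerate)
    (h11 : finrank ℂ (G.W 1 1) = 1) (h12 : finrank ℂ (G.W 1 2) = 1) {x₀ x₁ x₃ x₄ : V}
    (hW₁ : G.W 0 1 = span ℂ {x₀, x₁}) (hW₂ : G.W 0 2 = span ℂ {A.bk x₀ x₁})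
    (hW₃ : G.W 0 3 = span ℂ {x₃}) (hW₄ : G.W 0 4 = span ℂ {x₄}) (hx₃ : A.bk x₀ (A.bk x₀ x₁) = x₃)
    (hx₄ : A.bk x₀ x₃ = x₄) (hx₁x₃ : A.bk x₁ x₃ = 0) (hx₃0 : x₃ ≠ 0) (hx₄0 : x₄ ≠ 0) :
    ∃ y₁ y₂ : V, G.W 1 1 = span ℂ {y₁} ∧ G.W 1 2 = span ℂ {y₂} ∧ A.bk x₀ y₁ = y₂ ∧
      A.bk x₁ y₁ = 0 ∧ A.bk y₁ y₁ = (2 : ℂ) • A.bk x₀ x₁ ∧ A.bk y₁ y₂ = x₃ ∧ A.bk y₂ y₂ = x₄ := by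
  obtain ⟨y, -, hW₁₁⟩ := exists_ne_zero_eq_span_singleton h11
  obtain ⟨z, hz0, hW₁₂⟩ := exists_ne_zero_eq_span_singleton h12
  have hx₀ : x₀ ∈ G.W 0 1 := hW₁ ▸ subset_span (Set.mem_insert x₀ _)
  have hx₁ : x₁ ∈ G.W 0 1 := hW₁ ▸ subset_span (Set.mem_insert_of_mem x₀ rfl)
  have hy : y ∈ G.W 1 1 := hW₁₁ ▸ mem_span_singleton_self y
  have hz : z ∈ G.W 1 2 := hW₁₂ ▸ mem_span_singleton_self z
  obtain ⟨α, hα⟩ := mem_span_singleton.1 (hW₁₂ ▸ G.bk_mem 0 1 1 1 _ hx₀ _ hy)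
  obtain ⟨β, hβ⟩ := mem_span_singleton.1 (hW₁₂ ▸ G.bk_mem 0 1 1 1 _ hx₁ _ hy)
  obtain ⟨p, hp⟩ := mem_span_singleton.1 (hW₂ ▸ G.bk_mem 1 1 1 1 _ hy _ hy)
  obtain ⟨q, hq⟩ := mem_span_singleton.1 (hW₃ ▸ G.bk_mem 1 1 1 2 _ hy _ hz)
  obtain ⟨r, hr⟩ := mem_span_singleton.1 (hW₄ ▸ G.bk_mem 1 1 2 2 _ hz _ hz)
  obtain ⟨hpq, hqr, hβr⟩ := odd_structure_constants_of_jacobi (G.W_le_g hx₀) (G.W_le_g hx₁)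
    (G.W_le_g hy) (G.W_le_g hz) hx₃ hx₄ hx₁x₃ hx₃0 hx₄0 hα.symm hβ.symm
    (G.bk_eq_zero hN₁ (by norm_num) hx₀ hz) (G.bk_eq_zero hN₁ (by norm_num) hx₁ hz) hp.symm
    hq.symm hr.symm
  have hr0 : r ≠ 0 := by
    rintro rfl
    have hq0 : q = 0 := by rw [hqr, mul_zero]
    have := hnd.bk_ne_zero (G.g_one_eq_span_pair hN₁ hW₁₁ hW₁₂)
    simp [← hp, ← hq, ← hr, hpq, hq0] at this
  have hβ0 : β = 0 := (mul_eq_zero.1 hβr).resolve_right hr0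
  have hα0 : α ≠ 0 := by
    rintro rfl
    obtain ⟨x, hx, hxy⟩ :=
      G.exists_bk_ne_zero (k := 0) hN hW₁₁ ((Submodule.ne_bot_iff _).2 ⟨z, hz, hz0⟩)
    obtain ⟨a, b, rfl⟩ := mem_span_pair.1 (hW₁ ▸ hx)
    simp [← hα, ← hβ, hβ0] at hxy
  obtain ⟨l, hl0, hy₁y₁, hy₁y₂, hy₂y₂⟩ := exists_smul_normalize hα0
    (by rw [hqr]; exact mul_ne_zero hα0 hr0) hqr hα.symm (by rw [← hp, hpq]) hq.symm hr.symm
  refine ⟨l • y, A.bk x₀ (l • y), by rw [hW₁₁, span_singleton_smul_eq (IsUnit.mk0 _ hl0)], ?_,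
    rfl, by rw [map_smul, ← hβ, hβ0, zero_smul, smul_zero], hy₁y₁, hy₁y₂, hy₂y₂⟩
  rw [hW₁₂, map_smul, ← hα, smul_smul, span_singleton_smul_eq (IsUnit.mk0 _ (mul_ne_zero hl0 hα0))]

/-- Generators of the model `L^{4,2} + φ̄₂₄`, adapted to the grading `G`. -/
structure ModelBasis where
  x₀ : V
  x₁ : V
  y₁ : V
  y₂ : V
  W_zero_one : G.W 0 1 = span ℂ {x₀, x₁}
  W_zero_two : G.W 0 2 = span ℂ {A.bk x₀ x₁}
  W_zero_three : G.W 0 3 = span ℂ {A.bk x₀ (A.bk x₀ x₁)}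
  W_zero_four : G.W 0 4 = span ℂ {A.bk x₀ (A.bk x₀ (A.bk x₀ x₁))}
  W_one_one : G.W 1 1 = span ℂ {y₁}
  W_one_two : G.W 1 2 = span ℂ {y₂}
  bk_x₁_two : A.bk x₁ (A.bk x₀ x₁) = 0
  bk_x₁_three : A.bk x₁ (A.bk x₀ (A.bk x₀ x₁)) = 0
  bk_x₀_y₁ : A.bk x₀ y₁ = y₂
  bk_x₁_y₁ : A.bk x₁ y₁ = 0
  bk_y₁_y₁ : A.bk y₁ y₁ = (2 : ℂ) • A.bk x₀ x₁
  bk_y₁_y₂ : A.bk y₁ y₂ = A.bk x₀ (A.bk x₀ x₁)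
  bk_y₂_y₂ : A.bk y₂ y₂ = A.bk x₀ (A.bk x₀ (A.bk x₀ x₁))

namespace ModelBasis

variable {G} (B : G.ModelBasis)

def X : ℕ → V
  | 0 => B.x₀
  | 1 => B.x₁
  | n + 2 => A.bk B.x₀ (X (n + 1))

def Y (j : ℕ) : V := if j = 1 then B.y₁ else B.y₂

lemma X_mem_W {i : ℕ} (hi : i ≤ 4) : B.X i ∈ G.W 0 (max 1 i) := by
  interval_cases i
  · exact (B.W_zero_one ▸ subset_span (Set.mem_insert _ _) : B.x₀ ∈ G.W 0 1)
  · exact (B.W_zero_one ▸ subset_span (Set.mem_insert_of_mem _ rfl) : B.x₁ ∈ G.W 0 1)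
  · exact (B.W_zero_two ▸ mem_span_singleton_self _ : _ ∈ G.W 0 2)
  · exact (B.W_zero_three ▸ mem_span_singleton_self _ : _ ∈ G.W 0 3)
  · exact (B.W_zero_four ▸ mem_span_singleton_self _ : _ ∈ G.W 0 4)

lemma Y_mem_W {j : ℕ} (hj₁ : 1 ≤ j) (hj₂ : j ≤ 2) : B.Y j ∈ G.W 1 j := by
  interval_cases j
  · exact B.W_one_one ▸ mem_span_singleton_self _
  · exact B.W_one_two ▸ mem_span_singleton_self _

lemma X_mem_g {i : ℕ} (hi : i ≤ 4) : B.X i ∈ A.g 0 := by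
  have h := B.X_mem_W hi
  rw [show max 1 i = max 1 i - 1 + 1 by omega] at h
  exact G.W_le_g h

lemma Y_mem_g {j : ℕ} (hj₁ : 1 ≤ j) (hj₂ : j ≤ 2) : B.Y j ∈ A.g 1 := by
  obtain ⟨k, rfl⟩ : ∃ k, j = k + 1 := ⟨j - 1, by omega⟩
  exact G.W_le_g (B.Y_mem_W hj₁ hj₂)

lemma bk_X_X (hN : A.C 0 4 = ⊥) (i j : ℕ) (hi : i ≤ 4) (hj : j ≤ 4) :
    A.bk (B.X i) (B.X j) =
      if i = 0 ∧ 1 ≤ j ∧ j ≤ 3 then B.X (j + 1)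
      else if j = 0 ∧ 1 ≤ i ∧ i ≤ 3 then -B.X (i + 1) else 0 := by
  by_cases hdeg : 4 < max 1 i + max 1 j
  · rw [G.bk_eq_zero hN hdeg (B.X_mem_W hi) (B.X_mem_W hj), if_neg (by omega), if_neg (by omega)]
  have hx₀ : B.x₀ ∈ A.g 0 := B.X_mem_g (i := 0) (by norm_num)
  have hx₁ : B.x₁ ∈ A.g 0 := B.X_mem_g (i := 1) (by norm_num)
  have hx₂ : A.bk B.x₀ B.x₁ ∈ A.g 0 := B.X_mem_g (i := 2) (by norm_num)
  have hx₃ : A.bk B.x₀ (A.bk B.x₀ B.x₁) ∈ A.g 0 := B.X_mem_g (i := 3) (by norm_num)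
  interval_cases i <;> interval_cases j <;> try omega
  all_goals simp [X, bk_self_of_even, hx₀, hx₁, hx₂, bk_swap_of_even hx₀ hx₁,
    bk_swap_of_even hx₀ hx₂, bk_swap_of_even hx₀ hx₃, bk_swap_of_even hx₁ hx₂,
    bk_swap_of_even hx₁ hx₃, B.bk_x₁_two, B.bk_x₁_three]

lemma bk_X_Y (hN : A.C 1 2 = ⊥) (i j : ℕ) (hi : i ≤ 4) (hj₁ : 1 ≤ j) (hj₂ : j ≤ 2) :
    A.bk (B.X i) (B.Y j) = if i = 0 ∧ j = 1 then B.Y 2 else 0 := by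
  by_cases hdeg : 2 < max 1 i + j
  · rw [G.bk_eq_zero hN hdeg (B.X_mem_W hi) (B.Y_mem_W hj₁ hj₂), if_neg (by omega)]
  obtain ⟨rfl | rfl, rfl⟩ : (i = 0 ∨ i = 1) ∧ j = 1 := by omega
  · simp [X, Y, B.bk_x₀_y₁]
  · simp [X, Y, B.bk_x₁_y₁]

lemma bk_Y_Y (i j : ℕ) (hi₁ : 1 ≤ i) (hi₂ : i ≤ 2) (hj₁ : 1 ≤ j) (hj₂ : j ≤ 2) :
    A.bk (B.Y i) (B.Y j) =
      if i = 1 ∧ j = 1 then (2 : ℂ) • B.X 2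
      else if (i = 1 ∧ j = 2) ∨ (i = 2 ∧ j = 1) then B.X 3
      else if i = 2 ∧ j = 2 then B.X 4 else 0 := by
  have hy₁ : B.y₁ ∈ A.g 1 := B.Y_mem_g (j := 1) (by norm_num) (by norm_num)
  have hy₂ : B.y₂ ∈ A.g 1 := B.Y_mem_g (j := 2) (by norm_num) (by norm_num)
  interval_cases i <;> interval_cases j <;>
    simp [X, Y, B.bk_y₁_y₁, B.bk_y₁_y₂, B.bk_y₂_y₂, bk_comm_of_odd hy₂ hy₁]

lemma isAdaptedBasis [FiniteDimensional ℂ V] (hN₀ : A.C 0 4 = ⊥) (hN₁ : A.C 1 2 = ⊥)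
    (h0 : finrank ℂ (A.g 0) = 5) (h1 : finrank ℂ (A.g 1) = 2) : A.IsAdaptedBasis 4 2 B.X B.Y := by
  set F := span ℂ
    (Set.range (Sum.elim (fun i : Fin 5 => B.X i.val) (fun j : Fin 2 => B.Y (j.val + 1))))
  have hX (i : Fin 5) : B.X i ∈ F := subset_span ⟨Sum.inl i, rfl⟩
  have hY (j : Fin 2) : B.Y (j + 1) ∈ F := subset_span ⟨Sum.inr j, rfl⟩
  refine isAdaptedBasis_of_le_span (fun i hi => B.X_mem_g hi) (fun j hj₁ hj₂ => B.Y_mem_g hj₁ hj₂)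
    h0 h1 (sup_le (G.C_le_of_forall_W_le (k := 0) hN₀ fun i _ hi => ?_)
      (G.C_le_of_forall_W_le (k := 0) hN₁ fun i _ hi => ?_))
  · interval_cases i
    · rw [B.W_zero_one]
      exact span_le.2 (Set.insert_subset (hX 0) (Set.singleton_subset_iff.2 (hX 1)))
    · rw [B.W_zero_two, span_singleton_le_iff_mem]; exact hX 2
    · rw [B.W_zero_three, span_singleton_le_iff_mem]; exact hX 3
    · rw [B.W_zero_four, span_singleton_le_iff_mem]; exact hX 4
  · interval_cases i
    · rw [B.W_one_one, span_singleton_le_iff_mem]; exact hY 0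
    · rw [B.W_one_two, span_singleton_le_iff_mem]; exact hY 1

end ModelBasis

lemma nonempty_modelBasis [FiniteDimensional ℂ V] (hfil : A.IsFiliform 4 2)
    (hnd : A.NonDegenerate) : Nonempty G.ModelBasis := by
  have hN₀ : A.C 0 4 = ⊥ := hfil.2.2.2.2.2.1
  have hN₁ : A.C 1 2 = ⊥ := hfil.2.2.2.2.2.2
  obtain ⟨h1, h2, h3, h4, h11, h12⟩ := G.finrank_W_of_isFiliform hfil
  obtain ⟨x₀, x₁, hW₁, hW₂, hW₃, hW₄, hx₁x₂, hx₁x₃⟩ := G.exists_even_model_basis hN₀ h1 h2 h3 h4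
  obtain ⟨y₁, y₂, hW₁₁, hW₁₂, hx₀y₁, hx₁y₁, hy₁y₁, hy₁y₂, hy₂y₂⟩ :=
    G.exists_odd_model_basis hN₀ hN₁ hnd h11 h12 hW₁ hW₂ hW₃ hW₄ rfl rfl hx₁x₃
      (ne_zero_of_finrank_eq_one h3 hW₃) (ne_zero_of_finrank_eq_one h4 hW₄)
  exact ⟨⟨x₀, x₁, y₁, y₂, hW₁, hW₂, hW₃, hW₄, hW₁₁, hW₁₂, hx₁x₂, hx₁x₃, hx₀y₁, hx₁y₁, hy₁y₁,
    hy₁y₂, hy₂y₂⟩⟩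

end NaturalGrading

end LieSuperAlg

/-- Every non-degenerate naturally graded filiform Lie superalgebra with
`dim g₀ = 5` and `dim g₁ = 2` is isomorphic to `L^{4,2} + φ̄₂₄`:
`[X₀,X_i] = X_{i+1}` (`1 ≤ i ≤ 3`), `[X₀,Y₁] = Y₂`, `(Y₁,Y₁) = 2X₂`,
`(Y₁,Y₂) = X₃`, `(Y₂,Y₂) = X₄`. -/
theorem stmt2 {V : Type*} [AddCommGroup V] [Module ℂ V] [FiniteDimensional ℂ V] (A : LieSuperAlg V)
    (hfil : A.IsFiliform 4 2) (hnd : A.NonDegenerate) (hng : A.NaturallyGraded) :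
    ∃ X Y : ℕ → V, A.IsAdaptedBasis 4 2 X Y ∧
    (∀ i j : ℕ, i ≤ 4 → j ≤ 4 → A.bk (X i) (X j) =
      if i = 0 ∧ 1 ≤ j ∧ j ≤ 3 then X (j + 1)
      else if j = 0 ∧ 1 ≤ i ∧ i ≤ 3 then -X (i + 1) else 0) ∧
    (∀ i j : ℕ, i ≤ 4 → 1 ≤ j → j ≤ 2 → A.bk (X i) (Y j) =
      if i = 0 ∧ j = 1 then Y 2 else 0) ∧
    (∀ i j : ℕ, 1 ≤ i → i ≤ 2 → 1 ≤ j → j ≤ 2 → A.bk (Y i) (Y j) =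
      if i = 1 ∧ j = 1 then (2 : ℂ) • X 2
      else if (i = 1 ∧ j = 2) ∨ (i = 2 ∧ j = 1) then X 3
      else if i = 2 ∧ j = 2 then X 4 else 0) := by
  obtain ⟨W, -, hsplit, hdisj, hbk⟩ := hng
  let G : A.NaturalGrading := ⟨W, hsplit, hdisj, hbk⟩
  obtain ⟨B⟩ := G.nonempty_modelBasis hfil hnd
  obtain ⟨-, h0, h1, -, -, hN₀, hN₁⟩ := hfil
  exact ⟨B.X, B.Y, B.isAdaptedBasis hN₀ hN₁ h0 h1, B.bk_X_X hN₀, B.bk_X_Y hN₁, B.bk_Y_Y⟩
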